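/- arXiv:1111.3824 — 2 statements merged into one kernel-verified Lean document; each statement's English description precedes it below -/
import Mathlib

section
/- Let d ≥ 1 and let p₁, …, p_{d+1} be points in ℝ², p_i = (x_i, y_i) with x₁ < ⋯ < x_{d+1}. For each i let p̃_i = (x_i, x_i², …, x_i^{d−1}, y_i) ∈ ℝ^d. Then the sign of Δ_d(p₁, …, p_{d+1}) equals the sign of det M(p̃₁, …, p̃_{d+1}), where M(q₁, …, q_{d+1}) is the (d+1)×(d+1) matrix whose j-th column is (1, q_j). -/
/-!
Both sides are read off the interpolating polynomial `P` of degree at most `d` through the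
points `pᵢ`. The Neville recursion for Lagrange interpolation shows that `Δ_d(p₁, …, p_{d+1})` is
the coefficient of `X^d` in `P`. In `M(p̃₁, …, p̃_{d+1})` the rows are `1, x, …, x^{d-1}` and `y`,
where `yᵢ = ∑ₖ Pₖ xᵢ^k`; so the determinant is `P_d` times the Vandermonde determinant of the `xᵢ`,
which is positive because the `xᵢ` increase.
-/

/-- The `m`-th divided difference `Δ_m(p₁, …, p_{m+1})` of a tuple of points in the plane. -/
noncomputable def divdiff : (m : ℕ) → (Fin (m + 1) → ℝ × ℝ) → ℝ
  | 0, p => (p 0).2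
  | m + 1, p =>
      (divdiff m (fun i => p i.succ) - divdiff m (fun i => p i.castSucc)) /
        ((p (Fin.last (m + 1))).1 - (p 0).1)

/-- The matrix `M(q₁, …, q_{d+1})` whose `j`-th column is `1` followed by the `d`
coordinates of `qⱼ ∈ ℝ^d`. -/
def otMat {d : ℕ} (q : Fin (d + 1) → Fin d → ℝ) : Matrix (Fin (d + 1)) (Fin (d + 1)) ℝ :=
  Matrix.of fun r c => Fin.cases (1 : ℝ) (fun r' => q c r') r

open Finset Polynomial Lagrange Matrix

theorem divdiff_eq_coeff {m : ℕ} {p : Fin (m + 1) → ℝ × ℝ}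
    (hp : Function.Injective fun i => (p i).1) {P : ℝ[X]} (hP : P.degree < ↑(m + 1))
    (hPp : ∀ i, P.eval (p i).1 = (p i).2) : divdiff m p = P.coeff m := by
  induction m generalizing P with
  | zero =>
    rw [eq_C_of_degree_le_zero (Order.le_of_lt_succ hP)] at hPp ⊢
    simpa [divdiff] using (hPp 0).symm
  | succ m ih =>
    set x : Fin (m + 1 + 1) → ℝ := fun i => (p i).1
    set y : Fin (m + 1 + 1) → ℝ := fun i => (p i).2
    have hvs : Set.InjOn x ↑(univ : Finset (Fin (m + 1 + 1))) := hp.injOn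
    have hdeg : ∀ i, (interpolate (univ.erase i) x y).degree < ↑(m + 1) := fun i => by
      simpa using degree_interpolate_erase_lt y hvs (mem_univ i)
    have hnode : ∀ i j, j ≠ i → (interpolate (univ.erase i) x y).eval (x j) = y j :=
      fun i j hji => eval_interpolate_at_node y (hvs.mono (by simp)) (by simpa using hji)
    have hlast : Fin.last (m + 1) ≠ 0 := Fin.last_pos.ne'
    have hsucc : divdiff m (fun i => p i.succ) = (interpolate (univ.erase 0) x y).coeff m :=
      ih (hp.comp (Fin.succ_injective _)) (hdeg 0) fun i => hnode 0 i.succ (Fin.succ_ne_zero i)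
    have hcastSucc : divdiff m (fun i => p i.castSucc) =
        (interpolate (univ.erase (Fin.last _)) x y).coeff m :=
      ih (hp.comp (Fin.castSucc_injective _)) (hdeg _)
        fun i => hnode _ i.castSucc (Fin.castSucc_lt_last i).ne
    rw [eq_interpolate_of_eval_eq y hvs (by rw [card_univ, Fintype.card_fin]; exact hP)
        fun i _ => hPp i,
      interpolate_eq_add_interpolate_erase (r := y) hvs (mem_univ _) (mem_univ 0) hlast,
      divdiff, hsucc, hcastSucc]
    change (_ - _) / (x _ - x 0) = _
    simp only [basisDivisor, coeff_add, mul_left_comm _ (C _), coeff_C_mul, coeff_mul_X_sub_C,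
      coeff_eq_zero_of_degree_lt (hdeg _)]
    have hsub : x (Fin.last (m + 1)) - x 0 ≠ 0 := sub_ne_zero.mpr (hp.ne hlast)
    have hsub' : x 0 - x (Fin.last (m + 1)) ≠ 0 := sub_ne_zero.mpr (hp.ne hlast.symm)
    field_simp
    ring

theorem det_updateRow_last_vandermonde_transpose {R : Type*} [CommRing R] {n : ℕ}
    {x y : Fin (n + 1) → R} {P : R[X]} (hP : P.degree < ↑(n + 1))
    (hPy : ∀ c, P.eval (x c) = y c) :
    ((vandermonde x)ᵀ.updateRow (Fin.last n) y).det = P.coeff n * (vandermonde x).det := by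
  have hrow : y = ∑ k : Fin (n + 1), P.coeff k • (vandermonde x)ᵀ k := by
    ext c
    rw [← hPy, eval_eq_sum_range' (Nat.lt_succ_of_le (natDegree_le_of_degree_le
      (Order.le_of_lt_succ hP))), ← Fin.sum_univ_eq_sum_range]
    simp [Finset.sum_apply, vandermonde_apply]
  rw [hrow, det_updateRow_sum, det_transpose, smul_eq_mul, Fin.val_last]

theorem det_vandermonde_pos {R : Type*} [CommRing R] [PartialOrder R] [IsStrictOrderedRing R]
    {n : ℕ} {x : Fin n → R} (hx : StrictMono x) : 0 < (vandermonde x).det := by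
  rw [det_vandermonde]
  exact prod_pos fun i _ => prod_pos fun j hj => sub_pos.mpr (hx (mem_Ioi.mp hj))

theorem otMat_eq_updateRow_vandermonde {e : ℕ} (x y : Fin (e + 2) → ℝ) :
    otMat (fun i => fun j : Fin (e + 1) =>
        if (j : ℕ) + 1 = e + 1 then y i else x i ^ ((j : ℕ) + 1)) =
      (vandermonde x)ᵀ.updateRow (Fin.last (e + 1)) y := by
  ext r c
  induction r using Fin.cases with
  | zero => simp [otMat, updateRow_apply, vandermonde_apply]
  | succ r => simp [otMat, updateRow_apply, vandermonde_apply, Fin.ext_iff]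

theorem Real.sign_mul_of_pos {a b : ℝ} (hb : 0 < b) : Real.sign (a * b) = Real.sign a := by
  rcases lt_trichotomy a 0 with ha | rfl | ha
  · rw [Real.sign_of_neg ha, Real.sign_of_neg (mul_neg_of_neg_of_pos ha hb)]
  · simp
  · rw [Real.sign_of_pos ha, Real.sign_of_pos (mul_pos ha hb)]

/-- **Lemma 4.1**: for points `p₁, …, p_{d+1}` in the plane with `x₁ < ⋯ < x_{d+1}` and the
lifted points `p̃ᵢ = (xᵢ, xᵢ², …, xᵢ^{d-1}, yᵢ) ∈ ℝ^d`, the sign of `Δ_d(p₁, …, p_{d+1})`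
equals the sign of `det M(p̃₁, …, p̃_{d+1})`. -/
theorem stmt14 (d : ℕ) (hd : 1 ≤ d) (p : Fin (d + 1) → ℝ × ℝ)
    (hx : StrictMono fun i => (p i).1) :
    Real.sign (divdiff d p) =
      Real.sign (Matrix.det (otMat (fun i => fun j : Fin d =>
        if (j : ℕ) + 1 = d then (p i).2 else (p i).1 ^ ((j : ℕ) + 1)))) := by
  obtain ⟨e, rfl⟩ : ∃ e, d = e + 1 := ⟨d - 1, by omega⟩
  set P := interpolate univ (fun i => (p i).1) fun i => (p i).2
  have hvs : Set.InjOn (fun i => (p i).1) ↑(univ : Finset (Fin (e + 2))) := hx.injective.injOn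
  have hP : P.degree < ↑(e + 2) := by
    simpa only [card_univ, Fintype.card_fin] using degree_interpolate_lt (fun i => (p i).2) hvs
  have hPp : ∀ i, P.eval (p i).1 = (p i).2 := fun i => eval_interpolate_at_node _ hvs (mem_univ i)
  rw [otMat_eq_updateRow_vandermonde (fun i => (p i).1) fun i => (p i).2,
    det_updateRow_last_vandermonde_transpose hP hPp, ← divdiff_eq_coeff hx.injective hP hPp,
    Real.sign_mul_of_pos (det_vandermonde_pos hx)]
end

section
/- For all d ≥ 1 and n: if there exists an N-point set in ℝ² in d-general position containing no n-point dth-order monotone subset, then there exists a sequence of N points in ℝ^d in general position (no d+1 of them on a common hyperplane) containing no order-type homogeneous subsequence of n points. Consequently OT_d(n) ≥ ES_d(n). -/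
/-- A finite planar point set is in `k`-general position if its points have pairwise distinct
`x`-coordinates and no `k+1` of its points lie on the graph of a polynomial of degree
at most `k-1`. -/
def KGenPos (k : ℕ) (P : Finset (ℝ × ℝ)) : Prop :=
  (∀ p ∈ P, ∀ q ∈ P, p.1 = q.1 → p = q) ∧
  ∀ g : Polynomial ℝ, g.degree < (k : WithBot ℕ) →
    ∀ T ⊆ P, (∀ p ∈ T, Polynomial.eval p.1 g = p.2) → T.card ≤ k

/-- A planar point set `S` is `k`-th order monotone if the `k`-th divided difference of every
`(k+1)`-tuple of its points (listed in increasing order of `x`-coordinates) is nonnegative,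
or every such divided difference is nonpositive. -/
def KOrderMonotone (k : ℕ) (S : Finset (ℝ × ℝ)) : Prop :=
  (∀ q : Fin (k + 1) → ℝ × ℝ, (∀ i, q i ∈ S) →
      StrictMono (fun i => (q i).1) → 0 ≤ divdiff k q) ∨
  (∀ q : Fin (k + 1) → ℝ × ℝ, (∀ i, q i ∈ S) →
      StrictMono (fun i => (q i).1) → divdiff k q ≤ 0)

/-- `ES k n` : the least `N` such that every `N`-point planar set in `k`-general position
contains an `n`-point `k`-th order monotone subset. -/
noncomputable def ES (k n : ℕ) : ℕ :=
  sInf {N | ∀ P : Finset (ℝ × ℝ), P.card = N → KGenPos k P →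
    ∃ S ⊆ P, S.card = n ∧ KOrderMonotone k S}

/-- A sequence of points in `ℝ^d` is in general position if no `d+1` of its points lie
on a common hyperplane. -/
def GenPosSeq {d N : ℕ} (q : Fin N → Fin d → ℝ) : Prop :=
  ∀ (a : Fin d → ℝ) (b : ℝ), a ≠ 0 →
    ∀ T : Finset (Fin N), (∀ i ∈ T, ∑ j, a j * q i j = b) → T.card ≤ d

/-- A sequence of points in `ℝ^d` is order-type homogeneous if all its `(d+1)`-subtuples
(taken in increasing index order) induce determinants of the same sign. -/
def OTHomog {d N : ℕ} (q : Fin N → Fin d → ℝ) : Prop :=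
  ∃ ε : ℝ, ∀ σ : Fin (d + 1) → Fin N, StrictMono σ →
    Real.sign (Matrix.det (otMat fun i => q (σ i))) = ε

/-- `OT d n` : the least `N` such that every sequence of `N` points of `ℝ^d` in general
position contains an order-type homogeneous subsequence of `n` points. -/
noncomputable def OT (d n : ℕ) : ℕ :=
  sInf {N | ∀ q : Fin N → Fin d → ℝ, GenPosSeq q →
    ∃ ι : Fin n → Fin N, StrictMono ι ∧ OTHomog (q ∘ ι)}

open Polynomial Finset Matrix

theorem divdiff_succ (m : ℕ) (p : Fin (m + 2) → ℝ × ℝ) :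
    divdiff (m + 1) p = (divdiff m (p ∘ Fin.succ) - divdiff m (p ∘ Fin.castSucc)) /
      ((p (Fin.last (m + 1))).1 - (p 0).1) :=
  rfl

theorem divdiff_add (m : ℕ) (x y z : Fin (m + 1) → ℝ) :
    divdiff m (fun i => (x i, y i + z i)) =
      divdiff m (fun i => (x i, y i)) + divdiff m (fun i => (x i, z i)) := by
  induction m with
  | zero => rfl
  | succ m ih =>
    simp only [divdiff_succ, Function.comp_def, ih]
    ring

theorem divdiff_const (m : ℕ) (x : Fin (m + 1) → ℝ) (c : ℝ) :
    divdiff m (fun i => (x i, c)) = if m = 0 then c else 0 := by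
  induction m with
  | zero => rfl
  | succ m ih => simp [divdiff_succ, Function.comp_def, ih]

/-- The Leibniz rule for divided differences, with one factor linear. -/
theorem divdiff_succ_sub_mul (m : ℕ) (x : Fin (m + 2) → ℝ) (hx : Function.Injective x)
    (a : ℝ) (z : Fin (m + 2) → ℝ) :
    divdiff (m + 1) (fun i => (x i, (x i - a) * z i)) =
      divdiff m (fun i => (x i.succ, z i.succ)) +
        (x 0 - a) * divdiff (m + 1) (fun i => (x i, z i)) := by
  induction m with
  | zero =>
    have h : x 1 - x 0 ≠ 0 := sub_ne_zero.mpr (hx.ne (by decide))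
    have hlast : Fin.last 1 = 1 := rfl
    simp only [divdiff, hlast, Fin.succ_zero_eq_one, Fin.castSucc_zero]
    field_simp
    ring
  | succ m ih =>
    have hL0 : x (Fin.last (m + 2)) - x 0 ≠ 0 := sub_ne_zero.mpr (hx.ne (by simp [Fin.ext_iff]))
    have hL1 : x (Fin.last (m + 2)) - x 1 ≠ 0 := sub_ne_zero.mpr (hx.ne (by simp [Fin.ext_iff]))
    have ih_succ := ih (x ∘ Fin.succ) (hx.comp (Fin.succ_injective _)) (z ∘ Fin.succ)
    have ih_castSucc :=
      ih (x ∘ Fin.castSucc) (hx.comp (Fin.castSucc_injective _)) (z ∘ Fin.castSucc)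
    simp only [Function.comp_apply] at ih_succ ih_castSucc
    rw [divdiff_succ (m + 1) (fun i => (x i, (x i - a) * z i)), divdiff_succ (m + 1)]
    simp only [Function.comp_def, ih_succ, ih_castSucc]
    rw [divdiff_succ m (fun i => (x i.succ, z i.succ))]
    simp only [Function.comp_def, Fin.succ_last, Fin.succ_zero_eq_one, Fin.castSucc_zero,
      Fin.succ_castSucc]
    field_simp
    ring

theorem divdiff_eval (m : ℕ) (x : Fin (m + 1) → ℝ) (hx : Function.Injective x) (g : ℝ[X])
    (hg : g.natDegree ≤ m) : divdiff m (fun i => (x i, g.eval (x i))) = g.coeff m := by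
  induction m generalizing g with
  | zero =>
    obtain ⟨c, rfl⟩ := natDegree_eq_zero.mp (Nat.le_zero.mp hg)
    simp [divdiff]
  | succ m ih =>
    obtain ⟨g₁, hg₁⟩ : X - C (x 0) ∣ g - C (g.eval (x 0)) := X_sub_C_dvd_sub_C_eval
    have hg₁deg : g₁.natDegree ≤ m := by
      rcases eq_or_ne g₁ 0 with rfl | h0
      · simp
      have := congrArg natDegree hg₁
      rw [natDegree_mul (X_sub_C_ne_zero _) h0, natDegree_X_sub_C] at this
      have := (natDegree_sub_le g (C (g.eval (x 0)))).trans (by simpa using hg)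
      omega
    have hcoeff : g.coeff (m + 1) = g₁.coeff m := by
      simpa [coeff_C, sub_mul, coeff_X_mul,
        coeff_eq_zero_of_natDegree_lt (hg₁deg.trans_lt m.lt_succ_self)] using
        congrArg (coeff · (m + 1)) hg₁
    have hvals : (fun i => (x i, g.eval (x i))) =
        fun i => (x i, g.eval (x 0) + (x i - x 0) * g₁.eval (x i)) := funext fun i => by
      simpa [sub_eq_iff_eq_add'] using congrArg (eval (x i)) hg₁
    rw [hvals, divdiff_add, divdiff_const, divdiff_succ_sub_mul m x hx, sub_self, zero_mul,
      add_zero, if_neg m.succ_ne_zero, zero_add, hcoeff]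
    exact ih (fun i => x i.succ) (hx.comp (Fin.succ_injective _)) g₁ hg₁deg

def momentLift (e : ℕ) (p : ℝ × ℝ) : Fin (e + 1) → ℝ :=
  Fin.snoc (fun j : Fin e => p.1 ^ ((j : ℕ) + 1)) p.2

theorem otMat_momentLift (e : ℕ) (p : Fin (e + 2) → ℝ × ℝ) :
    otMat (fun i => momentLift e (p i)) =
      (vandermonde fun i => (p i).1)ᵀ.updateRow (Fin.last (e + 1)) fun i => (p i).2 := by
  ext r c
  refine Fin.cases ?_ (fun r' => ?_) r
  · have h0 : (0 : Fin (e + 2)) ≠ Fin.last (e + 1) := by simp [Fin.ext_iff]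
    simp [otMat, updateRow_apply, h0, vandermonde]
  refine Fin.lastCases ?_ (fun j => ?_) r'
  · simp [otMat, momentLift, ← Fin.succ_last]
  · have hne : j.castSucc.succ ≠ Fin.last (e + 1) := by simp [Fin.ext_iff]; omega
    simp [otMat, momentLift, updateRow_apply, hne, vandermonde]

/-- Expanding the last row `y` in the basis of powers of `x`, only the top coefficient of the
interpolating polynomial survives, and that coefficient is the divided difference. -/
theorem det_otMat_momentLift (e : ℕ) (p : Fin (e + 2) → ℝ × ℝ)
    (hx : Function.Injective fun i => (p i).1) :
    (otMat fun i => momentLift e (p i)).det =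
      (vandermonde fun i => (p i).1).det * divdiff (e + 1) p := by
  set x := fun i => (p i).1
  set g := Lagrange.interpolate univ x fun i => (p i).2
  have hy : ∀ i, (p i).2 = g.eval (x i) := fun i =>
    (Lagrange.eval_interpolate_at_node (fun i => (p i).2) hx.injOn (mem_univ i)).symm
  have hdeg : g.natDegree < e + 2 := by
    rcases eq_or_ne g 0 with h0 | h0
    · simp [h0]
    rw [natDegree_lt_iff_degree_lt h0]
    simpa only [card_univ, Fintype.card_fin] using
      Lagrange.degree_interpolate_lt (s := univ) (r := fun i => (p i).2) hx.injOn
  have hrow : (fun i => (p i).2) = ∑ k : Fin (e + 2), g.coeff k • (vandermonde x)ᵀ k := by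
    ext c
    rw [hy c, eval_eq_sum_range' hdeg, ← Fin.sum_univ_eq_sum_range (fun k => g.coeff k * _)]
    simp [vandermonde]
  have hdivdiff : divdiff (e + 1) p = g.coeff (e + 1) := by
    rw [← divdiff_eval (e + 1) x hx g (Nat.lt_succ_iff.mp hdeg)]
    exact congrArg _ (funext fun i => Prod.ext rfl (hy i))
  rw [otMat_momentLift, hrow, det_updateRow_sum, det_transpose, hdivdiff]
  simp [x, mul_comm]

theorem Real.sign_mul_of_pos_s15 {c : ℝ} (hc : 0 < c) (r : ℝ) : Real.sign (c * r) = Real.sign r := by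
  rcases lt_trichotomy r 0 with h | rfl | h
  · rw [Real.sign_of_neg h, Real.sign_of_neg (mul_neg_of_pos_of_neg hc h)]
  · simp
  · rw [Real.sign_of_pos h, Real.sign_of_pos (mul_pos hc h)]

theorem sign_det_otMat_momentLift (e : ℕ) (p : Fin (e + 2) → ℝ × ℝ)
    (hx : StrictMono fun i => (p i).1) :
    Real.sign (otMat fun i => momentLift e (p i)).det = Real.sign (divdiff (e + 1) p) := by
  have hV : 0 < (vandermonde fun i => (p i).1).det := by
    rw [det_vandermonde]
    exact prod_pos fun i _ => prod_pos fun j hj => sub_pos.mpr (hx (mem_Ioi.mp hj))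
  rw [det_otMat_momentLift e p hx.injective, Real.sign_mul_of_pos_s15 hV]

noncomputable def momentPoly (e : ℕ) (a : Fin (e + 1) → ℝ) : ℝ[X] :=
  ∑ j : Fin e, C (a j.castSucc) * X ^ ((j : ℕ) + 1)

theorem sum_mul_momentLift (e : ℕ) (a : Fin (e + 1) → ℝ) (p : ℝ × ℝ) :
    ∑ j, a j * momentLift e p j = (momentPoly e a).eval p.1 + a (Fin.last e) * p.2 := by
  simp [Fin.sum_univ_castSucc, momentLift, momentPoly, eval_finsetSum]

theorem natDegree_momentPoly_le (e : ℕ) (a : Fin (e + 1) → ℝ) :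
    (momentPoly e a).natDegree ≤ e :=
  natDegree_sum_le_of_forall_le _ _ fun j _ =>
    (natDegree_C_mul_X_pow_le _ _).trans (Nat.succ_le_of_lt j.is_lt)

theorem coeff_momentPoly_succ (e : ℕ) (a : Fin (e + 1) → ℝ) (j : Fin e) :
    (momentPoly e a).coeff (j + 1) = a j.castSucc := by
  rw [momentPoly, finsetSum_coeff, sum_eq_single j]
  · simp
  · intro i _ hij
    simp [coeff_X_pow, Fin.val_ne_of_ne hij.symm]
  · simp

theorem genPosSeq_momentLift {e N : ℕ} {P : Finset (ℝ × ℝ)} (hP : KGenPos (e + 1) P)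
    {p : Fin N → ℝ × ℝ} (hp : Function.Injective p) (hpP : ∀ i, p i ∈ P) :
    GenPosSeq fun i => momentLift e (p i) := by
  intro a b ha T hT
  simp only [sum_mul_momentLift] at hT
  rcases eq_or_ne (a (Fin.last e)) 0 with hlast | hlast
  · have hx : Function.Injective fun i => (p i).1 := fun i j h =>
      hp (hP.1 _ (hpP i) _ (hpP j) h)
    set H := momentPoly e a - C b
    have hH : H ≠ 0 := by
      obtain ⟨j, hj⟩ := Function.ne_iff.mp ha
      obtain ⟨j, rfl⟩ : ∃ j', Fin.castSucc j' = j :=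
        Fin.exists_castSucc_eq.mpr (by rintro rfl; exact hj hlast)
      intro h0
      exact hj <| by
        simpa [H, coeff_momentPoly_succ, coeff_C] using congrArg (coeff · (j + 1)) h0
    have hroots : (T.image fun i => (p i).1).val ⊆ H.roots := fun z hz => by
      obtain ⟨i, hi, rfl⟩ := mem_image.mp hz
      simpa [mem_roots hH, H, hlast, sub_eq_zero] using hT i hi
    calc T.card = (T.image fun i => (p i).1).card := (card_image_of_injective _ hx).symm
      _ ≤ H.natDegree := card_le_degree_of_subset_roots hroots
      _ ≤ e := (natDegree_sub_le _ _).trans (by simp [natDegree_momentPoly_le])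
      _ ≤ e + 1 := e.le_succ
  · set g := C (a (Fin.last e))⁻¹ * (C b - momentPoly e a)
    have hg : g.degree < (e + 1 : ℕ) := by
      have : g.natDegree ≤ e := (natDegree_C_mul_le _ _).trans <|
        (natDegree_sub_le _ _).trans (by simp [natDegree_momentPoly_le])
      exact degree_le_natDegree.trans_lt (by exact_mod_cast Nat.lt_succ_of_le this)
    have hgraph : ∀ q ∈ T.image p, g.eval q.1 = q.2 := by
      simp only [mem_image, forall_exists_index, and_imp, forall_apply_eq_imp_iff₂]
      intro i hi
      simp only [g, eval_mul, eval_C, eval_sub, ← hT i hi]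
      field_simp
      ring
    simpa [card_image_of_injective _ hp] using
      hP.2 g hg (T.image p) (image_subset_iff.mpr fun i _ => hpP i) hgraph

theorem kOrderMonotone_of_otHomog {e n : ℕ} {p : Fin n → ℝ × ℝ}
    (hpx : StrictMono fun i => (p i).1) (h : OTHomog fun i => momentLift e (p i)) :
    KOrderMonotone (e + 1) (univ.image p) := by
  obtain ⟨ε, hε⟩ := h
  have hsign : ∀ r : Fin (e + 2) → ℝ × ℝ, (∀ i, r i ∈ univ.image p) →
      StrictMono (fun i => (r i).1) → Real.sign (divdiff (e + 1) r) = ε := by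
    intro r hr hrx
    choose k _ hk using fun i => mem_image.mp (hr i)
    obtain rfl : r = p ∘ k := funext fun i => (hk i).symm
    rw [← sign_det_otMat_momentLift e (p ∘ k) hrx]
    exact hε k fun i j hij => hpx.lt_iff_lt.mp (hrx hij)
  by_cases hε : ε = -1
  · refine Or.inr fun r hr hrx => not_lt.mp fun hpos => ?_
    have h := hsign r hr hrx
    norm_num [Real.sign_of_pos hpos, hε] at h
  · exact Or.inl fun r hr hrx => not_lt.mp fun hneg =>
      hε (by rw [← hsign r hr hrx, Real.sign_of_neg hneg])

theorem exists_strictMono_fst_of_injOn {P : Finset (ℝ × ℝ)}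
    (hP : ∀ p ∈ P, ∀ q ∈ P, p.1 = q.1 → p = q) :
    ∃ p : Fin P.card → ℝ × ℝ, (∀ i, p i ∈ P) ∧ StrictMono fun i => (p i).1 := by
  have hcard : (P.image Prod.fst).card = P.card :=
    card_image_of_injOn fun u hu v hv => hP u hu v hv
  choose p hpP hpx using fun i => mem_image.mp ((P.image Prod.fst).orderEmbOfFin_mem hcard i)
  refine ⟨p, hpP, fun i j hij => ?_⟩
  simpa only [hpx] using ((P.image Prod.fst).orderEmbOfFin hcard).strictMono hij

theorem exists_genPosSeq_forall_not_otHomog {e n : ℕ} {P : Finset (ℝ × ℝ)}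
    (hP : KGenPos (e + 1) P) (hno : ∀ S ⊆ P, S.card = n → ¬ KOrderMonotone (e + 1) S) :
    ∃ q : Fin P.card → Fin (e + 1) → ℝ, GenPosSeq q ∧
      ∀ ι : Fin n → Fin P.card, StrictMono ι → ¬ OTHomog (q ∘ ι) := by
  obtain ⟨p, hpP, hpx⟩ := exists_strictMono_fst_of_injOn hP.1
  have hp : Function.Injective p := fun i j h => hpx.injective (congrArg Prod.fst h)
  refine ⟨fun i => momentLift e (p i), genPosSeq_momentLift hP hp hpP,
    fun ι hι hhom => hno (univ.image (p ∘ ι)) (image_subset_iff.mpr fun i _ => hpP _) ?_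
      (kOrderMonotone_of_otHomog (hpx.comp hι) hhom)⟩
  rw [card_image_of_injective _ (hp.comp hι.injective), card_univ, Fintype.card_fin]

section Ramsey

variable {α : Type*}

def IsMonochromatic (k : ℕ) (f : Finset α → Bool) (S : Finset α) (c : Bool) : Prop :=
  ∀ T ⊆ S, T.card = k → f T = c

theorem IsMonochromatic.mono {k : ℕ} {f : Finset α → Bool} {S S' : Finset α} {c : Bool}
    (h : IsMonochromatic k f S c) (hS' : S' ⊆ S) : IsMonochromatic k f S' c :=
  fun T hT => h T (hT.trans hS')

theorem isMonochromatic_empty (k : ℕ) (f : Finset α → Bool) (c : Bool) :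
    IsMonochromatic (k + 1) f ∅ c := by
  intro T hT hTc
  simp [subset_empty.mp hT] at hTc

theorem IsMonochromatic.insert [DecidableEq α] {k : ℕ} {f : Finset α → Bool} {S : Finset α}
    {c : Bool} {v : α} (h : IsMonochromatic (k + 1) f S c)
    (hv : IsMonochromatic k (fun K => f (insert v K)) S c) :
    IsMonochromatic (k + 1) f (insert v S) c := by
  intro T hT hTc
  by_cases hvT : v ∈ T
  · rw [← insert_erase hvT]
    exact hv _ (subset_insert_iff.mp hT) (by rw [card_erase_of_mem hvT, hTc]; rfl)
  · exact h T ((subset_insert_iff_of_notMem hvT).mp hT) hTc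

variable (α) in
def IsRamseyBound (k p q N : ℕ) : Prop :=
  ∀ (f : Finset α → Bool) (V : Finset α), N ≤ V.card →
    (∃ S ⊆ V, p ≤ S.card ∧ IsMonochromatic k f S true) ∨
    (∃ S ⊆ V, q ≤ S.card ∧ IsMonochromatic k f S false)

theorem isRamseyBound_zero (p q : ℕ) : IsRamseyBound α 0 p q (max p q) := by
  intro f V hV
  have hmono : IsMonochromatic 0 f V (f ∅) := fun T _ hT => by rw [card_eq_zero.mp hT]
  cases hc : f ∅
  · exact Or.inr ⟨V, subset_rfl, le_of_max_le_right hV, hc ▸ hmono⟩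
  · exact Or.inl ⟨V, subset_rfl, le_of_max_le_left hV, hc ▸ hmono⟩

theorem IsRamseyBound.succ_succ [DecidableEq α] {k p q N₁ N₂ M : ℕ}
    (h₁ : IsRamseyBound α (k + 1) p (q + 1) N₁) (h₂ : IsRamseyBound α (k + 1) (p + 1) q N₂)
    (h₃ : IsRamseyBound α k N₁ N₂ M) : IsRamseyBound α (k + 1) (p + 1) (q + 1) (M + 1) := by
  intro f V hV
  obtain ⟨v, hv⟩ : V.Nonempty := card_pos.mp (by omega)
  have extend : ∀ {U S : Finset α} {c : Bool}, U ⊆ V.erase v → S ⊆ U →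
      IsMonochromatic k (fun K => f (insert v K)) U c → IsMonochromatic (k + 1) f S c →
      ∃ S' ⊆ V, S.card + 1 ≤ S'.card ∧ IsMonochromatic (k + 1) f S' c := by
    intro U S c hUV hSU hU hS
    have hvS : v ∉ S := fun h => notMem_erase v V (hUV (hSU h))
    refine ⟨insert v S, insert_subset hv ((hSU.trans hUV).trans (erase_subset v V)), ?_,
      hS.insert (hU.mono hSU)⟩
    rw [card_insert_of_notMem hvS]
  have hV' : M ≤ (V.erase v).card := by rw [card_erase_of_mem hv]; omega
  rcases h₃ (fun K => f (insert v K)) (V.erase v) hV' with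
    ⟨U, hUV, hU, hmono⟩ | ⟨U, hUV, hU, hmono⟩
  · rcases h₁ f U hU with ⟨S, hSU, hS, hS'⟩ | ⟨S, hSU, hS, hS'⟩
    · obtain ⟨S', hS'V, hcard, hS'mono⟩ := extend hUV hSU hmono hS'
      exact Or.inl ⟨S', hS'V, by omega, hS'mono⟩
    · exact Or.inr ⟨S, (hSU.trans hUV).trans (erase_subset v V), hS, hS'⟩
  · rcases h₂ f U hU with ⟨S, hSU, hS, hS'⟩ | ⟨S, hSU, hS, hS'⟩
    · exact Or.inl ⟨S, (hSU.trans hUV).trans (erase_subset v V), hS, hS'⟩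
    · obtain ⟨S', hS'V, hcard, hS'mono⟩ := extend hUV hSU hmono hS'
      exact Or.inr ⟨S', hS'V, by omega, hS'mono⟩

theorem exists_isRamseyBound (k p q : ℕ) :
    ∃ N, ∀ (α : Type*) [DecidableEq α], IsRamseyBound α k p q N := by
  induction k generalizing p q with
  | zero => exact ⟨_, fun _ _ => isRamseyBound_zero p q⟩
  | succ k ihk =>
    induction p generalizing q with
    | zero =>
      exact ⟨0, fun _ _ f V _ => Or.inl ⟨∅, empty_subset V, le_rfl, isMonochromatic_empty k f _⟩⟩
    | succ p ihp =>
      induction q with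
      | zero =>
        exact ⟨0, fun _ _ f V _ => Or.inr ⟨∅, empty_subset V, le_rfl, isMonochromatic_empty k f _⟩⟩
      | succ q ihq =>
        obtain ⟨N₁, h₁⟩ := ihp (q + 1)
        obtain ⟨N₂, h₂⟩ := ihq
        obtain ⟨M, h₃⟩ := ihk N₁ N₂
        exact ⟨M + 1, fun α _ => (h₁ α).succ_succ (h₂ α) (h₃ α)⟩

end Ramsey

theorem det_otMat_ne_zero {d N : ℕ} {q : Fin N → Fin d → ℝ} (hq : GenPosSeq q)
    {σ : Fin (d + 1) → Fin N} (hσ : Function.Injective σ) :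
    (otMat fun i => q (σ i)).det ≠ 0 := by
  intro h0
  obtain ⟨v, hv0, hv⟩ := exists_vecMul_eq_zero_iff.mpr h0
  have hplane : ∀ j, ∑ r, v r.succ * q (σ j) r = -v 0 := fun j => by
    have := congrFun hv j
    simp only [vecMul, dotProduct, otMat, of_apply, Fin.sum_univ_succ, Fin.cases_zero,
      Fin.cases_succ, Pi.zero_apply, mul_one] at this
    linarith
  have ha : (fun r : Fin d => v r.succ) ≠ 0 := fun ha => hv0 <| funext fun r => by
    refine Fin.cases ?_ (congrFun ha) r
    have h := hplane 0
    simp only [show ∀ r : Fin d, v r.succ = 0 from congrFun ha, zero_mul, sum_const_zero] at h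
    simpa using h.symm
  have := hq _ _ ha (univ.image σ) (by simpa using fun j => hplane j)
  rw [card_image_of_injective _ hσ, card_univ, Fintype.card_fin] at this
  omega

noncomputable def orientationColouring {d N : ℕ} (q : Fin N → Fin d → ℝ) (T : Finset (Fin N)) :
    Bool :=
  if h : T.card = d + 1 then decide (0 < (otMat fun i => q (T.orderEmbOfFin h i)).det) else true

theorem otHomog_of_isMonochromatic {d N n : ℕ} {q : Fin N → Fin d → ℝ} (hq : GenPosSeq q)
    {S : Finset (Fin N)} {c : Bool} (hS : IsMonochromatic (d + 1) (orientationColouring q) S c)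
    {ι : Fin n → Fin N} (hι : StrictMono ι) (hιS : ∀ i, ι i ∈ S) : OTHomog (q ∘ ι) := by
  refine ⟨if c then 1 else -1, fun σ hσ => ?_⟩
  have hτ : StrictMono (ι ∘ σ) := hι.comp hσ
  set T := univ.image (ι ∘ σ)
  have hT : T.card = d + 1 := by
    rw [card_image_of_injective _ hτ.injective, card_univ, Fintype.card_fin]
  have henum : ⇑(T.orderEmbOfFin hT) = ι ∘ σ :=
    (orderEmbOfFin_unique hT (fun i => mem_image_of_mem _ (mem_univ i)) hτ).symm
  have hcolour := hS T (image_subset_iff.mpr fun i _ => hιS _) hT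
  have hne := det_otMat_ne_zero hq hτ.injective
  simp only [orientationColouring, dif_pos hT, henum, Function.comp_apply] at hcolour hne
  cases c
  · simp [Real.sign_of_neg (lt_of_le_of_ne (not_lt.mp (by simpa using hcolour)) hne)]
  · simp [Real.sign_of_pos (by simpa using hcolour)]

theorem exists_forall_genPosSeq_exists_otHomog (d n : ℕ) :
    ∃ N, ∀ q : Fin N → Fin d → ℝ, GenPosSeq q →
      ∃ ι : Fin n → Fin N, StrictMono ι ∧ OTHomog (q ∘ ι) := by
  obtain ⟨N, hN⟩ := exists_isRamseyBound (d + 1) n n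
  refine ⟨N, fun q hq => ?_⟩
  rcases hN (Fin N) (orientationColouring q) univ (by simp) with
    ⟨S, -, hS, hmono⟩ | ⟨S, -, hS, hmono⟩ <;>
  exact ⟨S.orderEmbOfCardLe hS, (S.orderEmbOfCardLe hS).strictMono,
    otHomog_of_isMonochromatic hq hmono (S.orderEmbOfCardLe hS).strictMono
      (S.orderEmbOfCardLe_mem hS)⟩

/-- **Proposition 1.6**: for `d ≥ 1` and any `n`, from any `N`-point planar set in `d`-general
position with no `n`-point `d`-th order monotone subset one obtains a sequence of `N` points
in `ℝ^d` in general position with no order-type homogeneous subsequence of `n` points;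
consequently `OT_d(n) ≥ ES_d(n)`. -/
theorem stmt15 (d n : ℕ) (hd : 1 ≤ d) :
    (∀ N : ℕ,
      (∃ P : Finset (ℝ × ℝ), P.card = N ∧ KGenPos d P ∧
        ∀ S ⊆ P, S.card = n → ¬ KOrderMonotone d S) →
      ∃ q : Fin N → Fin d → ℝ, GenPosSeq q ∧
        ∀ ι : Fin n → Fin N, StrictMono ι → ¬ OTHomog (q ∘ ι)) ∧
    ES d n ≤ OT d n := by
  obtain ⟨e, rfl⟩ : ∃ e, d = e + 1 := ⟨d - 1, by omega⟩
  have lift : ∀ N : ℕ, (∃ P : Finset (ℝ × ℝ), P.card = N ∧ KGenPos (e + 1) P ∧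
      ∀ S ⊆ P, S.card = n → ¬ KOrderMonotone (e + 1) S) →
      ∃ q : Fin N → Fin (e + 1) → ℝ, GenPosSeq q ∧
        ∀ ι : Fin n → Fin N, StrictMono ι → ¬ OTHomog (q ∘ ι) := by
    rintro _ ⟨P, rfl, hP, hno⟩
    exact exists_genPosSeq_forall_not_otHomog hP hno
  refine ⟨lift, Nat.sInf_le fun P hcard hP => ?_⟩
  by_contra! hno
  obtain ⟨q, hq, hnot⟩ := lift _ ⟨P, hcard, hP, hno⟩
  obtain ⟨ι, hι, hhom⟩ := Nat.sInf_mem (exists_forall_genPosSeq_exists_otHomog (e + 1) n) q hq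
  exact hnot ι hι hhom
end
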